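/- Let e ≤ n be natural numbers and set C_{e,n} := √(1 − 1/binom(n,e)). Then for every e-dimensional linear subspace V of ℝ^n there exists a coordinate subspace V_I (spanned by standard basis vectors e_i, i ∈ I, with |I| = e) such that δ(V, V_I) ≤ C_{e,n}, where δ(V,W) := ‖π_V − π_W‖ is the operator-norm distance between orthogonal projections. -/

import Mathlib

/-!
Take an orthonormal basis `b` of `V` and let `M` be the `n × e` matrix with columns `b j`. By
Cauchy–Binet, `1 = det (Mᵀ M) = ∑_I det (M_I)²` over the `binom(n, e)` row sets `I`, so some minor
has `det (M_I)² ≥ 1 / binom(n, e)`. `M_I` is the matrix of inner products between the standard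
basis of `V_I` and `b`, so `π_{V_I}` restricted to `V` and `π_V` restricted to `V_I` are
contractions of determinant `± det M_I`. A contraction `T` satisfies `‖T x‖ ≥ |det T| ‖x‖`, since
the eigenvalues of `T* T` lie in `[0, 1]` and multiply to `det T ^ 2`. Finally, if `π_W` shrinks
squared norms on `V` by at most the factor `c`, and `π_V` does so on `W`, then
`‖π_V - π_W‖ ≤ √(1 - c)`.
-/

open MeasureTheory Set ENNReal
noncomputable section

abbrev E (n : ℕ) := EuclideanSpace ℝ (Fin n)

def projL {n : ℕ} (V : Submodule ℝ (E n)) : E n →L[ℝ] E n :=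
  V.subtypeL.comp (Submodule.orthogonalProjection V)

/-- δ(V,W) := ‖π_V − π_W‖ (operator norm). -/
def delta {n : ℕ} (V W : Submodule ℝ (E n)) : ℝ := ‖projL V - projL W‖

/-- The coordinate subspace spanned by the standard basis vectors indexed by I. -/
def coordSubspace {n : ℕ} (I : Finset (Fin n)) : Submodule ℝ (E n) :=
  Submodule.span ℝ ((fun i => EuclideanSpace.single i (1 : ℝ)) '' ↑I)

open scoped RealInnerProductSpace

namespace LinearMap
variable {F : Type*} [NormedAddCommGroup F] [InnerProductSpace ℝ F] [FiniteDimensional ℝ F]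

theorem sq_det_mul_norm_sq_le_of_forall_norm_le (T : F →ₗ[ℝ] F) (hT : ∀ x, ‖T x‖ ≤ ‖x‖)
    (x : F) : T.det ^ 2 * ‖x‖ ^ 2 ≤ ‖T x‖ ^ 2 := by
  have hS : (T.adjoint * T).IsSymmetric := T.isSymmetric_adjoint_mul_self
  have hn : Module.finrank ℝ F = Module.finrank ℝ F := rfl
  set μ := hS.eigenvalues hn
  set v := hS.eigenvectorBasis hn
  have inner_adjoint_mul_self : ∀ y, ⟪(T.adjoint * T) y, y⟫ = ‖T y‖ ^ 2 := fun y => by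
    rw [Module.End.mul_apply, adjoint_inner_left, real_inner_self_eq_norm_sq]
  have hμ : ∀ i, μ i = ‖T (v i)‖ ^ 2 := fun i => by
    rw [← inner_adjoint_mul_self, hS.apply_eigenvectorBasis, real_inner_smul_left,
      real_inner_self_eq_norm_sq, v.orthonormal.1 i, one_pow, mul_one]
    rfl
  have hdet : T.det ^ 2 = ∏ i, μ i := by
    rw [← sq_abs, ← normDet_eq_abs_det]
    exact_mod_cast (T.normDet_sq).trans (hS.det_eq_prod_eigenvalues hn)
  have hμ_le : ∀ i, T.det ^ 2 ≤ μ i := fun i => by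
    rw [hdet, ← Finset.mul_prod_erase _ _ (Finset.mem_univ i)]
    refine mul_le_of_le_one_right (by rw [hμ]; positivity) (Finset.prod_le_one ?_ ?_)
    · intro j _; rw [hμ]; positivity
    · intro j _
      rw [hμ, ← one_pow 2, ← v.orthonormal.1 j]
      gcongr
      exact hT _
  have expand : ∀ y, ⟪(T.adjoint * T) y, y⟫ = ∑ i, μ i * (v.repr y i) ^ 2 := fun y => by
    rw [← v.repr.inner_map_map, PiLp.inner_apply]
    refine Finset.sum_congr rfl fun i _ => ?_
    have h := hS.eigenvectorBasis_apply_self_apply hn y i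
    simp only [RCLike.inner_apply, conj_trivial]
    rw [h, RCLike.ofReal_real_eq_id, id_eq]
    ring
  calc T.det ^ 2 * ‖x‖ ^ 2 = ∑ i, T.det ^ 2 * (v.repr x i) ^ 2 := by
        rw [← v.repr.norm_map, EuclideanSpace.norm_sq_eq, Finset.mul_sum]; simp
    _ ≤ ∑ i, μ i * (v.repr x i) ^ 2 := by gcongr with i; exact hμ_le i
    _ = ‖T x‖ ^ 2 := by rw [← expand, inner_adjoint_mul_self]

end LinearMap

section
variable {α : Type*} [Fintype α] [LinearOrder α] {e : ℕ}

theorem sum_injective_eq_sum_sum_perm {M : Type*} [AddCommMonoid M]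
    (f : (Fin e → α) → M) :
    ∑ r with Function.Injective r, f r =
      ∑ I : {I : Finset α // I.card = e}, ∑ σ : Equiv.Perm (Fin e),
        f (I.1.orderEmbOfFin I.2 ∘ σ) := by
  rw [← Fintype.sum_prod_type', eq_comm]
  refine Finset.sum_bij (fun p _ => p.1.1.orderEmbOfFin p.1.2 ∘ p.2) ?_ ?_ ?_ fun _ _ => rfl
  · intro p _
    simpa using (p.1.1.orderEmbOfFin p.1.2).injective.comp p.2.injective
  · rintro ⟨⟨I, hI⟩, σ⟩ - ⟨⟨J, hJ⟩, τ⟩ - h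
    have hIJ : I = J := by
      have := congrArg Set.range h
      simp only [EquivLike.range_comp, Finset.range_orderEmbOfFin] at this
      exact_mod_cast this
    subst hIJ
    have hστ : σ = τ := Equiv.ext fun j => (I.orderEmbOfFin hI).injective (congrFun h j)
    rw [hστ]
  · intro r hr
    have hinj : Function.Injective r := (Finset.mem_filter.mp hr).2
    set I := Finset.univ.image r
    have hI : I.card = e := by
      rw [Finset.card_image_of_injective _ hinj, Finset.card_univ, Fintype.card_fin]
    have hrI : ∀ j, r j ∈ I := fun j => Finset.mem_image_of_mem r (Finset.mem_univ j)
    let σ₀ : Fin e → Fin e := fun j => (I.orderIsoOfFin hI).symm ⟨r j, hrI j⟩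
    have hσ₀ : Function.Injective σ₀ := fun a b hab => hinj (by simpa [σ₀] using hab)
    refine ⟨(⟨I, hI⟩, Equiv.ofBijective σ₀ hσ₀.bijective_of_finite), Finset.mem_univ _, ?_⟩
    funext j
    simp [σ₀, ← Finset.coe_orderIsoOfFin_apply]

end

namespace Matrix
variable {R : Type*} [CommRing R] {α : Type*} [Fintype α]

theorem det_mul_eq_sum_prod_mul_det_submatrix {m : Type*} [Fintype m] [DecidableEq m]
    (A : Matrix m α R) (B : Matrix α m R) :
    (A * B).det = ∑ r : m → α, (∏ j, A j (r j)) * (B.submatrix r id).det := by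
  have hrows : A * B = of fun j => ∑ i, A j i • B i := by
    ext j k
    simp [mul_apply, Finset.sum_apply]
  rw [hrows]
  refine (detRowAlternating.toMultilinearMap.map_sum fun j i => A j i • B i).trans
    (Finset.sum_congr rfl fun r _ => ?_)
  exact (detRowAlternating.map_smul_univ (fun j => A j (r j)) fun j => B (r j)).trans
    (smul_eq_mul _ _)

variable [LinearOrder α] {e : ℕ}

theorem det_mul_eq_sum_det_submatrix_mul_det_submatrix (A : Matrix (Fin e) α R)
    (B : Matrix α (Fin e) R) :
    (A * B).det = ∑ I : {I : Finset α // I.card = e},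
      (A.submatrix id (I.1.orderEmbOfFin I.2)).det *
        (B.submatrix (I.1.orderEmbOfFin I.2) id).det := by
  rw [det_mul_eq_sum_prod_mul_det_submatrix, ← Finset.sum_filter_of_ne (p := Function.Injective),
    sum_injective_eq_sum_sum_perm]
  · refine Finset.sum_congr rfl fun I _ => ?_
    set ι := I.1.orderEmbOfFin I.2
    calc ∑ σ : Equiv.Perm (Fin e), (∏ j, A j (ι (σ j))) * (B.submatrix (ι ∘ σ) id).det
        = ∑ σ : Equiv.Perm (Fin e), (Equiv.Perm.sign σ * ∏ j, (A.submatrix id ι)ᵀ (σ j) j) *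
            (B.submatrix ι id).det := by
          refine Finset.sum_congr rfl fun σ _ => ?_
          rw [show B.submatrix (ι ∘ σ) id = (B.submatrix ι id).submatrix σ id from rfl,
            det_permute]
          simp only [transpose_apply, submatrix_apply, id]
          ring
      _ = _ := by rw [← Finset.sum_mul, ← det_apply', det_transpose]
  · intro r _ hr
    by_contra hninj
    obtain ⟨i, j, hij, hne⟩ := Function.not_injective_iff.mp hninj
    exact hr (by rw [det_zero_of_row_eq hne (funext fun k => by simp [hij]), mul_zero])

theorem exists_one_div_choose_le_sq_det_submatrix (he : e ≤ Fintype.card α)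
    (M : Matrix α (Fin e) ℝ) (hM : Mᵀ * M = 1) :
    ∃ I : {I : Finset α // I.card = e},
      1 / ((Fintype.card α).choose e : ℝ) ≤ (M.submatrix (I.1.orderEmbOfFin I.2) id).det ^ 2 := by
  have hsum : ∑ I : {I : Finset α // I.card = e},
      (M.submatrix (I.1.orderEmbOfFin I.2) id).det ^ 2 = 1 := by
    rw [← det_one (n := Fin e) (R := ℝ), ← hM, det_mul_eq_sum_det_submatrix_mul_det_submatrix]
    refine Finset.sum_congr rfl fun I _ => ?_
    rw [← transpose_submatrix, det_transpose, sq]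
  have hcard : (Fintype.card {I : Finset α // I.card = e} : ℝ) = (Fintype.card α).choose e := by
    rw [Fintype.card_finset_len]
  have hpos : (0 : ℝ) < (Fintype.card α).choose e := by exact_mod_cast Nat.choose_pos he
  have hne : (Finset.univ : Finset {I : Finset α // I.card = e}).Nonempty :=
    Finset.univ_nonempty_iff.2 ⟨⟨_, (Finset.exists_subset_card_eq he).choose_spec.2⟩⟩
  obtain ⟨I, -, hI⟩ := Finset.exists_le_of_sum_le hne
    (f := fun _ => 1 / ((Fintype.card α).choose e : ℝ)) (by
      rw [hsum, Finset.sum_const, Finset.card_univ, nsmul_eq_mul, hcard,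
        mul_one_div_cancel hpos.ne'])
  exact ⟨I, hI⟩

end Matrix

namespace Submodule
variable {F : Type*} [NormedAddCommGroup F] [InnerProductSpace ℝ F] {c : ℝ}

theorem norm_sub_starProjection_sq_le {L : Submodule ℝ F} [L.HasOrthogonalProjection] {v : F}
    (hv : c * ‖v‖ ^ 2 ≤ ‖L.starProjection v‖ ^ 2) :
    ‖v - L.starProjection v‖ ^ 2 ≤ (1 - c) * ‖v‖ ^ 2 := by
  have h := norm_sq_eq_add_norm_sq_starProjection v L
  rw [starProjection_orthogonal_val] at h
  linarith

variable {K L : Submodule ℝ F} [K.HasOrthogonalProjection] [L.HasOrthogonalProjection]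

theorem norm_starProjection_sq_le_of_mem_orthogonal
    (hKL : ∀ v ∈ K, c * ‖v‖ ^ 2 ≤ ‖L.starProjection v‖ ^ 2) (hc : c ≤ 1)
    {y : F} (hy : y ∈ Lᗮ) : ‖K.starProjection y‖ ^ 2 ≤ (1 - c) * ‖y‖ ^ 2 := by
  set p := K.starProjection y
  have hp : p ∈ K := K.starProjection_apply_mem y
  have hp_sq : ‖p‖ ^ 2 ≤ ‖y‖ * ‖p - L.starProjection p‖ := by
    have hp_orth : ⟪y - p, p⟫ = 0 := K.starProjection_inner_eq_zero y p hp
    have hy_orth : ⟪y, L.starProjection p⟫ = 0 :=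
      inner_left_of_mem_orthogonal (L.starProjection_apply_mem p) hy
    rw [inner_sub_left, real_inner_self_eq_norm_sq] at hp_orth
    calc ‖p‖ ^ 2 = ⟪y, p - L.starProjection p⟫ := by
          rw [inner_sub_right, hy_orth]; linarith
      _ ≤ ‖y‖ * ‖p - L.starProjection p‖ := real_inner_le_norm _ _
  rcases (norm_nonneg p).eq_or_lt with hp0 | hp0
  · rw [← hp0]; nlinarith [sq_nonneg ‖y‖]
  · refine le_of_mul_le_mul_right ?_ (pow_pos hp0 2)
    calc ‖p‖ ^ 2 * ‖p‖ ^ 2 ≤ (‖y‖ * ‖p - L.starProjection p‖) ^ 2 := by rw [← sq]; gcongr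
      _ ≤ ‖y‖ ^ 2 * ((1 - c) * ‖p‖ ^ 2) := by
          rw [mul_pow]; gcongr; exact norm_sub_starProjection_sq_le (hKL p hp)
      _ = (1 - c) * ‖y‖ ^ 2 * ‖p‖ ^ 2 := by ring

theorem norm_starProjection_sub_starProjection_le
    (hKL : ∀ v ∈ K, c * ‖v‖ ^ 2 ≤ ‖L.starProjection v‖ ^ 2)
    (hLK : ∀ w ∈ L, c * ‖w‖ ^ 2 ≤ ‖K.starProjection w‖ ^ 2) (hc : c ≤ 1) :
    ‖K.starProjection - L.starProjection‖ ≤ √(1 - c) := by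
  refine ContinuousLinearMap.opNorm_le_bound _ (Real.sqrt_nonneg _) fun x => ?_
  set y := Lᗮ.starProjection x
  set w := L.starProjection x
  have hsplit : ‖(K.starProjection - L.starProjection) x‖ ^ 2
      = ‖K.starProjection y‖ ^ 2 + ‖w - K.starProjection w‖ ^ 2 := by
    have hdecomp : (K.starProjection - L.starProjection) x
        = K.starProjection y - (w - K.starProjection w) := by
      simp only [y, w, sub_apply, starProjection_orthogonal_val, map_sub]
      abel
    rw [hdecomp, norm_sub_sq_real, inner_right_of_mem_orthogonal (K.starProjection_apply_mem y)
      (K.sub_starProjection_mem_orthogonal w)]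
    ring
  have hy := norm_starProjection_sq_le_of_mem_orthogonal hKL hc (Lᗮ.starProjection_apply_mem x)
  have hw := norm_sub_starProjection_sq_le (hLK w (L.starProjection_apply_mem x))
  have hx := norm_sq_eq_add_norm_sq_starProjection x L
  rw [← Real.sqrt_sq (norm_nonneg x), ← Real.sqrt_mul (by linarith)]
  apply Real.le_sqrt_of_sq_le
  nlinarith

end Submodule

section InnerMatrix
variable {F : Type*} [NormedAddCommGroup F] [InnerProductSpace ℝ F]
  {ι : Type*} [Fintype ι] [DecidableEq ι] {V U : Submodule ℝ F}
  [FiniteDimensional ℝ V] [FiniteDimensional ℝ U]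

theorem sq_det_inner_mul_norm_sq_le_norm_starProjection_sq (b : OrthonormalBasis ι ℝ V)
    (u : OrthonormalBasis ι ℝ U) {v : F} (hv : v ∈ V) :
    (Matrix.of fun k j => ⟪(u k : F), (b j : F)⟫).det ^ 2 * ‖v‖ ^ 2 ≤
      ‖U.starProjection v‖ ^ 2 := by
  -- transport `π_U|_V : V → U` back to `V` along the isometry matching `u` with `b`
  let T : V →ₗ[ℝ] V := (u.repr.trans b.repr.symm).toLinearEquiv.toLinearMap ∘ₗ
    (U.orthogonalProjectionOnto.toLinearMap ∘ₗ V.subtype)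
  have hT : ∀ w : V, ‖T w‖ = ‖U.starProjection (w : F)‖ := fun w => by
    simp [T]
  have hdet : T.det = (Matrix.of fun k j => ⟪(u k : F), (b j : F)⟫).det := by
    rw [← LinearMap.det_toMatrix b.toBasis]
    congr 1
    ext k j
    simp [T, LinearMap.toMatrix_apply, OrthonormalBasis.repr_apply_apply]
  have h := T.sq_det_mul_norm_sq_le_of_forall_norm_le
    (fun w => (hT w).trans_le (U.norm_starProjection_apply_le _)) ⟨v, hv⟩
  rwa [hdet, hT] at h

theorem norm_starProjection_sub_starProjection_le_sqrt_one_sub_sq_det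
    (b : OrthonormalBasis ι ℝ V) (u : OrthonormalBasis ι ℝ U) :
    ‖V.starProjection - U.starProjection‖ ≤
      √(1 - (Matrix.of fun k j => ⟪(u k : F), (b j : F)⟫).det ^ 2) := by
  have htranspose : (Matrix.of fun j k => ⟪(b j : F), (u k : F)⟫) =
      (Matrix.of fun k j => ⟪(u k : F), (b j : F)⟫).transpose := by
    ext j k; simp [real_inner_comm]
  have hc : (Matrix.of fun k j => ⟪(u k : F), (b j : F)⟫).det ^ 2 ≤ 1 := by
    rcases isEmpty_or_nonempty ι with hι | ⟨⟨i⟩⟩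
    · simp [Matrix.det_isEmpty]
    · have h := sq_det_inner_mul_norm_sq_le_norm_starProjection_sq b u (b i).2
      have hb_norm : ‖(b i : F)‖ = 1 := b.orthonormal.1 i
      have hproj := U.norm_starProjection_apply_le (b i : F)
      rw [hb_norm] at h hproj
      nlinarith [norm_nonneg (U.starProjection (b i : F))]
  refine Submodule.norm_starProjection_sub_starProjection_le
    (fun v hv => sq_det_inner_mul_norm_sq_le_norm_starProjection_sq b u hv)
    (fun w hw => ?_) hc
  have h := sq_det_inner_mul_norm_sq_le_norm_starProjection_sq u b hw
  rwa [htranspose, Matrix.det_transpose] at h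

end InnerMatrix

theorem Orthonormal.transpose_mul_self_eq_one {m ι : Type*} [Fintype m] [DecidableEq ι]
    {v : ι → EuclideanSpace ℝ m} (hv : Orthonormal ℝ v) :
    (Matrix.of fun i j => v j i).transpose * Matrix.of (fun i j => v j i) = 1 := by
  have h := Matrix.gram_eq_conjTranspose_mul (EuclideanSpace.basisFun m ℝ) v
  rw [Matrix.gram_eq_one_iff_orthonormal.2 hv] at h
  simpa using h.symm

open Classical in
def coordBasis {n e : ℕ} (I : Finset (Fin n)) (hI : I.card = e) :
    OrthonormalBasis (Fin e) ℝ (coordSubspace I) :=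
  ((OrthonormalBasis.span EuclideanSpace.orthonormal_single I).reindex
    (I.orderIsoOfFin hI).symm.toEquiv).map
    (LinearIsometryEquiv.ofEq _ _ (by rw [coordSubspace, Finset.coe_image]))

theorem coe_coordBasis_apply {n e : ℕ} (I : Finset (Fin n)) (hI : I.card = e) (k : Fin e) :
    (coordBasis I hI k : E n) = EuclideanSpace.single (I.orderEmbOfFin hI k) 1 := by
  simp [coordBasis]

theorem stmt3 (n e : ℕ) (he : e ≤ n)
    (V : Submodule ℝ (E n)) (hV : Module.finrank ℝ V = e) :
    ∃ I : Finset (Fin n), I.card = e ∧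
      delta V (coordSubspace I) ≤ Real.sqrt (1 - 1 / (n.choose e)) := by
  let b : OrthonormalBasis (Fin e) ℝ V := (stdOrthonormalBasis ℝ V).reindex (finCongr hV)
  let M : Matrix (Fin n) (Fin e) ℝ := Matrix.of fun i j => (b j : E n) i
  have hM : M.transpose * M = 1 :=
    (b.orthonormal.comp_linearIsometry V.subtypeₗᵢ).transpose_mul_self_eq_one
  obtain ⟨⟨I, hI⟩, hdet⟩ :=
    Matrix.exists_one_div_choose_le_sq_det_submatrix (by simpa using he) M hM
  refine ⟨I, hI, ?_⟩
  have hinner : (Matrix.of fun k j => ⟪(coordBasis I hI k : E n), (b j : E n)⟫) =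
      M.submatrix (I.orderEmbOfFin hI) id := by
    ext k j
    simp [coe_coordBasis_apply, EuclideanSpace.inner_single_left, M]
  calc delta V (coordSubspace I)
      ≤ √(1 - (M.submatrix (I.orderEmbOfFin hI) id).det ^ 2) :=
        hinner ▸ norm_starProjection_sub_starProjection_le_sqrt_one_sub_sq_det b (coordBasis I hI)
    _ ≤ √(1 - 1 / n.choose e) := by
        rw [Fintype.card_fin] at hdet
        exact Real.sqrt_le_sqrt (by linarith)
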